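/- The function x ↦ h⁻¹(x)·(1 − h⁻¹(x)) is convex on the interval [0,1]. -/

import Mathlib

open Finset Asymptotics Filter

/-- Binary entropy function (base-2 logarithms). -/
noncomputable def binEnt (p : ℝ) : ℝ :=
  -(p * Real.logb 2 p) - (1 - p) * Real.logb 2 (1 - p)

/-- Inverse of the binary entropy function restricted to `[0, 1/2]`. -/
noncomputable def binEntInv (x : ℝ) : ℝ :=
  sSup {p : ℝ | p ∈ Set.Icc (0:ℝ) (1/2) ∧ binEnt p ≤ x}

/-- `p*q = p(1-q) + q(1-p)`. -/
def pstar (p q : ℝ) : ℝ := p * (1 - q) + q * (1 - p)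

/-- Probability of the rectangle `A × B` for `ρ`-correlated uniform binary strings. -/
noncomputable def Pxy (n : ℕ) (ρ : ℝ) (A B : Finset (Fin n → Bool)) : ℝ :=
  ∑ a ∈ A, ∑ b ∈ B,
    (2:ℝ)⁻¹ ^ n * ((1 + ρ)/2) ^ n * ((1 - ρ)/(1 + ρ)) ^ (hammingDist a b)

/-- Hamming sphere of radius `j` around the all-zeros string in `{0,1}^n`. -/
def hSphere (n j : ℕ) : Finset (Fin n → Bool) :=
  Finset.univ.filter (fun x => (Finset.univ.filter (fun i => x i = true)).card = j)

/-- The exponent function `w_d(α,β)`. -/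
noncomputable def wd (α β d : ℝ) : ℝ :=
  α + binEntInv α * binEnt (1/2 + (binEntInv β - d)/(2 * binEntInv α))
    + (1 - binEntInv α) * binEnt (1/2 + (d - (1 - binEntInv β))/(2 * (1 - binEntInv α)))

/-- The noise operator `T_ρ`. -/
noncomputable def Tnoise (n : ℕ) (ρ : ℝ) (f : (Fin n → Bool) → ℝ) (y : Fin n → Bool) : ℝ :=
  ∑ x : Fin n → Bool,
    f x * ((1 + ρ)/2) ^ (n - hammingDist x y) * ((1 - ρ)/2) ^ (hammingDist x y)

/-- The normalized `p`-norm on functions on the hypercube. -/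
noncomputable def pNorm (n : ℕ) (p : ℝ) (f : (Fin n → Bool) → ℝ) : ℝ :=
  ((2:ℝ)⁻¹ ^ n * ∑ x : Fin n → Bool, |f x| ^ p) ^ (1/p)

/-- Indicator function of a set `A ⊆ {0,1}^n`. -/
def indA (n : ℕ) (A : Finset (Fin n → Bool)) : (Fin n → Bool) → ℝ :=
  fun x => if x ∈ A then 1 else 0

/-!
Write `p = h⁻¹(x)`, so that the function is `q(p) = p(1 - p)` read in the coordinate `x = h(p)`.
Its slope between two points is, by Cauchy's mean value theorem, `q'(ξ) / h'(ξ)` at an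
intermediate `ξ ∈ (0, 1/2)`, and `q'(p) / h'(p) = (1 - 2p) ln 2 / ln((1 - p)/p)` increases in `p`
because `2 ln t ≤ t - 1/t` for `t = (1 - p)/p ≥ 1`. Since `h⁻¹` is increasing, the slopes
increase from left to right, which is convexity.
-/

open Set Real

/-- `F' / f'` is the derivative of `F ∘ φ` in the coordinate `x = f p`; Cauchy's mean value
theorem compares slopes of `F ∘ φ` without differentiating `φ`. -/
theorem convexOn_comp_of_monotoneOn_div_deriv {f F f' F' φ : ℝ → ℝ} {D : Set ℝ} {a b : ℝ}
    (hD : Convex ℝ D) (hφ : StrictMonoOn φ D) (hφD : MapsTo φ D (Icc a b))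
    (hfφ : ∀ x ∈ D, f (φ x) = x)
    (hf : ContinuousOn f (Icc a b)) (hF : ContinuousOn F (Icc a b))
    (hf' : ∀ p ∈ Ioo a b, HasDerivAt f (f' p) p)
    (hF' : ∀ p ∈ Ioo a b, HasDerivAt F (F' p) p) (hf'_ne : ∀ p ∈ Ioo a b, f' p ≠ 0)
    (hmono : MonotoneOn (fun p => F' p / f' p) (Ioo a b)) :
    ConvexOn ℝ D (F ∘ φ) := by
  have hO : ∀ {u v}, u ∈ D → v ∈ D → Ioo (φ u) (φ v) ⊆ Ioo a b := fun hu hv =>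
    Ioo_subset_Ioo (hφD hu).1 (hφD hv).2
  have slope_eq : ∀ u ∈ D, ∀ v ∈ D, u < v →
      ∃ c ∈ Ioo (φ u) (φ v), (F (φ v) - F (φ u)) / (v - u) = F' c / f' c := by
    intro u hu v hv huv
    have hI : Icc (φ u) (φ v) ⊆ Icc a b := Icc_subset_Icc (hφD hu).1 (hφD hv).2
    obtain ⟨c, hc, hcF⟩ := exists_ratio_hasDerivAt_eq_ratio_slope f f' (hφ hu hv huv)
      (hf.mono hI) (fun c hc => hf' c (hO hu hv hc)) F F' (hF.mono hI)
      (fun c hc => hF' c (hO hu hv hc))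
    refine ⟨c, hc, ?_⟩
    rw [hfφ u hu, hfφ v hv] at hcF
    rw [div_eq_div_iff (sub_pos.2 huv).ne' (hf'_ne c (hO hu hv hc))]
    linarith
  refine convexOn_of_slope_mono_adjacent hD fun {x y z} hx hz hxy hyz => ?_
  have hy : y ∈ D := hD.ordConnected.out hx hz ⟨hxy.le, hyz.le⟩
  obtain ⟨c₁, hc₁, h₁⟩ := slope_eq x hx y hy hxy
  obtain ⟨c₂, hc₂, h₂⟩ := slope_eq y hy z hz hyz
  simp only [Function.comp_apply, h₁, h₂]
  exact hmono (hO hx hy hc₁) (hO hy hz hc₂) (hc₁.2.trans hc₂.1).le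

theorem Real.two_mul_log_le_sub_inv {t : ℝ} (ht : 1 ≤ t) : 2 * log t ≤ t - t⁻¹ := by
  have := self_le_sinh_iff.2 (log_nonneg ht)
  rw [sinh_log (by linarith)] at this
  linarith

theorem Real.log_one_sub_sub_log_pos {p : ℝ} (hp₀ : 0 < p) (hp : p < 1 / 2) :
    0 < log (1 - p) - log p :=
  sub_pos.2 (log_lt_log hp₀ (by linarith))

theorem monotoneOn_one_sub_two_mul_div_log :
    MonotoneOn (fun p => (1 - 2 * p) / (log (1 - p) - log p)) (Ioo 0 (1 / 2)) := by
  have hderiv : ∀ p ∈ Ioo (0 : ℝ) (1 / 2),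
      HasDerivAt (fun p => (1 - 2 * p) / (log (1 - p) - log p))
        (((1 - 2 * p) / (p * (1 - p)) - 2 * (log (1 - p) - log p)) / (log (1 - p) - log p) ^ 2)
        p := by
    rintro p ⟨hp₀, hp₂⟩
    have hq : 0 < 1 - p := by linarith
    have hnum := ((hasDerivAt_id p).const_mul 2).const_sub 1
    have hden := (((hasDerivAt_id p).const_sub 1).log hq.ne').sub ((hasDerivAt_id p).log hp₀.ne')
    refine (hnum.div hden (log_one_sub_sub_log_pos hp₀ hp₂).ne').congr_deriv ?_
    simp only [id, Pi.sub_apply]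
    field_simp
    ring
  refine monotoneOn_of_hasDerivWithinAt_nonneg (convex_Ioo 0 (1 / 2))
    (fun p hp => (hderiv p hp).continuousAt.continuousWithinAt)
    (fun p hp => (hderiv p (interior_subset hp)).hasDerivWithinAt) ?_
  rw [interior_Ioo]
  rintro p ⟨hp₀, hp₂⟩
  have hq : 0 < 1 - p := by linarith
  have ht : 1 ≤ (1 - p) / p := by rw [le_div_iff₀ hp₀]; linarith
  have hsub : (1 - p) / p - ((1 - p) / p)⁻¹ = (1 - 2 * p) / (p * (1 - p)) := by
    field_simp
    ring
  have := two_mul_log_le_sub_inv ht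
  rw [hsub, log_div hq.ne' hp₀.ne'] at this
  exact div_nonneg (by linarith) (sq_nonneg _)

theorem Real.log_two_pos : 0 < log 2 := log_pos one_lt_two

lemma binEnt_eq_binEntropy_div (p : ℝ) : binEnt p = binEntropy p / log 2 := by
  simp only [binEnt, binEntropy, logb, log_inv]
  ring

lemma binEnt_continuous : Continuous binEnt := by
  simpa only [funext binEnt_eq_binEntropy_div] using binEntropy_continuous.div_const (log 2)

lemma binEnt_strictMonoOn : StrictMonoOn binEnt (Set.Icc (0 : ℝ) (1 / 2)) := by
  intro p hp q hq hpq
  simp only [binEnt_eq_binEntropy_div]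
  rw [one_div] at hp hq
  exact div_lt_div_of_pos_right (binEntropy_strictMonoOn hp hq hpq) log_two_pos

lemma hasDerivAt_binEnt {p : ℝ} (hp₀ : p ≠ 0) (hp₁ : p ≠ 1) :
    HasDerivAt binEnt ((log (1 - p) - log p) / log 2) p := by
  simpa only [funext binEnt_eq_binEntropy_div] using (hasDerivAt_binEntropy hp₀ hp₁).div_const _

lemma binEntInv_binEnt {p : ℝ} (hp : p ∈ Set.Icc (0 : ℝ) (1 / 2)) :
    binEntInv (binEnt p) = p :=
  IsGreatest.csSup_eq
    ⟨⟨hp, le_rfl⟩, fun _ hq => (binEnt_strictMonoOn.le_iff_le hq.1 hp).1 hq.2⟩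

lemma exists_binEnt_eq {x : ℝ} (hx : x ∈ Set.Icc (0 : ℝ) 1) :
    ∃ p ∈ Set.Icc (0 : ℝ) (1 / 2), binEnt p = x := by
  have h₀ : binEnt 0 = 0 := by simp [binEnt]
  have h₁ : binEnt (1 / 2) = 1 := by
    rw [binEnt_eq_binEntropy_div, one_div, binEntropy_two_inv, div_self log_two_pos.ne']
  rw [← h₀, ← h₁] at hx
  exact intermediate_value_Icc (by norm_num) binEnt_continuous.continuousOn hx

lemma binEntInv_mem_Icc {x : ℝ} (hx : x ∈ Set.Icc (0 : ℝ) 1) :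
    binEntInv x ∈ Set.Icc (0 : ℝ) (1 / 2) := by
  obtain ⟨p, hp, rfl⟩ := exists_binEnt_eq hx
  rwa [binEntInv_binEnt hp]

lemma binEnt_binEntInv {x : ℝ} (hx : x ∈ Set.Icc (0 : ℝ) 1) : binEnt (binEntInv x) = x := by
  obtain ⟨p, hp, rfl⟩ := exists_binEnt_eq hx
  rw [binEntInv_binEnt hp]

lemma binEntInv_strictMonoOn : StrictMonoOn binEntInv (Set.Icc (0 : ℝ) 1) := by
  intro x hx y hy hxy
  rwa [← binEnt_strictMonoOn.lt_iff_lt (binEntInv_mem_Icc hx) (binEntInv_mem_Icc hy),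
    binEnt_binEntInv hx, binEnt_binEntInv hy]

/-- `x ↦ h⁻¹(x)(1 − h⁻¹(x))` is convex on `[0,1]`. -/
theorem stmt_12 :
    ConvexOn ℝ (Set.Icc (0:ℝ) 1) (fun x : ℝ => binEntInv x * (1 - binEntInv x)) := by
  have hmul : ∀ p : ℝ, HasDerivAt (fun p => p * (1 - p)) (1 - 2 * p) p := fun p =>
    ((hasDerivAt_id p).mul ((hasDerivAt_id p).const_sub 1)).congr_deriv (by simp only [id]; ring)
  refine convexOn_comp_of_monotoneOn_div_deriv (convex_Icc 0 1) binEntInv_strictMonoOn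
    (fun _ => binEntInv_mem_Icc) (fun _ => binEnt_binEntInv) binEnt_continuous.continuousOn
    (by fun_prop) (fun p hp => hasDerivAt_binEnt hp.1.ne' (by linarith [hp.2]))
    (fun p _ => hmul p) (fun p hp => ?_) (fun p hp q hq hpq => ?_)
  · exact div_ne_zero (log_one_sub_sub_log_pos hp.1 hp.2).ne' log_two_pos.ne'
  · simp only [div_div_eq_mul_div, mul_div_right_comm _ (log 2)]
    exact mul_le_mul_of_nonneg_right (monotoneOn_one_sub_two_mul_div_log hp hq hpq)
      log_two_pos.le
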